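/- arXiv:1105.4926 — 4 statements merged into one kernel-verified Lean document; each statement's English description precedes it below -/
import Mathlib

section
/- Let k be a field of characteristic p > 0, and let X_0, ..., X_m be pairwise commuting d×d matrices over k with X_i^p = 0 for all i. For each r ≥ 0 with base-p expansion r = r_0 + r_1 p + ... + r_m p^m (digits 0 ≤ r_i < p), define c^r = (r_0! ··· r_m!)^{−1} X_0^{r_0} ··· X_m^{r_m}, and c^r = 0 if r ≥ p^{m+1}. Then c^r · c^s = C(r+s, r) · c^{r+s} for all r, s ≥ 0, where C(r+s,r) is reduced mod p. -/
private lemma auxDivAdd {p : ℕ} (hp : 0 < p) {r s : ℕ} (h : r % p + s % p < p) :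
    (r + s) / p = r / p + s / p := by
  have e : r + s = p * (r / p + s / p) + (r % p + s % p) := by
    rw [Nat.mul_add]
    have h1 := Nat.div_add_mod r p
    have h2 := Nat.div_add_mod s p
    omega
  rw [e, Nat.mul_add_div hp, Nat.div_eq_of_lt h, Nat.add_zero]

private lemma auxModAdd {p : ℕ} (hp : 0 < p) {r s : ℕ} (h : r % p + s % p < p) :
    (r + s) % p = r % p + s % p := by
  have e : r + s = p * (r / p + s / p) + (r % p + s % p) := by
    rw [Nat.mul_add]
    have h1 := Nat.div_add_mod r p
    have h2 := Nat.div_add_mod s p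
    omega
  rw [e, Nat.mul_add_mod, Nat.mod_eq_of_lt h]

private lemma auxModCarry {p : ℕ} (hp : 0 < p) {r s : ℕ} (h1 : p ≤ r % p + s % p) :
    (r + s) % p + p = r % p + s % p := by
  have hr : r % p < p := Nat.mod_lt _ hp
  have hs : s % p < p := Nat.mod_lt _ hp
  rw [Nat.add_mod, Nat.mod_eq_sub_mod h1, Nat.mod_eq_of_lt (by omega), Nat.sub_add_cancel h1]

private lemma auxDigitNoCarry {p : ℕ} (hp : 0 < p) :
    ∀ (i r s : ℕ), (∀ j, j ≤ i → r / p ^ j % p + s / p ^ j % p < p) →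
      (r + s) / p ^ i % p = r / p ^ i % p + s / p ^ i % p := by
  intro i
  induction i with
  | zero => intro r s h; simpa using auxModAdd hp (by simpa using h 0 le_rfl)
  | succ i ih =>
    intro r s h
    have h0 : r % p + s % p < p := by simpa using h 0 (Nat.zero_le _)
    have hd : (r + s) / p = r / p + s / p := auxDivAdd hp h0
    have e : ∀ t : ℕ, t / p ^ (i + 1) = t / p / p ^ i := by
      intro t; rw [Nat.div_div_eq_div_mul, ← pow_succ']
    rw [e, e, e, hd, ih (r / p) (s / p) ?_]
    intro j hj
    rw [Nat.div_div_eq_div_mul, Nat.div_div_eq_div_mul, ← pow_succ']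
    exact h (j + 1) (by omega)

private lemma auxDigitCarry {p : ℕ} (hp : 0 < p) :
    ∀ (i r s : ℕ), (∀ j, j < i → r / p ^ j % p + s / p ^ j % p < p) →
      p ≤ r / p ^ i % p + s / p ^ i % p →
      (r + s) / p ^ i % p + p = r / p ^ i % p + s / p ^ i % p := by
  intro i
  induction i with
  | zero => intro r s _ h1; simpa using auxModCarry hp (by simpa using h1)
  | succ i ih =>
    intro r s h h1
    have h0 : r % p + s % p < p := by simpa using h 0 (Nat.succ_pos _)
    have hd : (r + s) / p = r / p + s / p := auxDivAdd hp h0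
    have e : ∀ t : ℕ, t / p ^ (i + 1) = t / p / p ^ i := by
      intro t; rw [Nat.div_div_eq_div_mul, ← pow_succ']
    rw [e, e, e, hd]
    refine ih (r / p) (s / p) ?_ ?_
    · intro j hj
      rw [Nat.div_div_eq_div_mul, Nat.div_div_eq_div_mul, ← pow_succ']
      exact h (j + 1) (by omega)
    · rw [e, e] at h1
      exact h1

private lemma auxNoCarryLt {p : ℕ} (hp : 0 < p) :
    ∀ (n r s : ℕ), r < p ^ n → s < p ^ n →
      (∀ j, j < n → r / p ^ j % p + s / p ^ j % p < p) → r + s < p ^ n := by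
  intro n
  induction n with
  | zero => intro r s hr hs _; simp only [pow_zero] at hr hs ⊢; omega
  | succ n ih =>
    intro r s hr hs h
    have h0 : r % p + s % p < p := by simpa using h 0 (Nat.succ_pos _)
    have hd : (r + s) / p = r / p + s / p := auxDivAdd hp h0
    have hr' : r / p < p ^ n := by
      rw [Nat.div_lt_iff_lt_mul hp]; rw [pow_succ] at hr; exact hr
    have hs' : s / p < p ^ n := by
      rw [Nat.div_lt_iff_lt_mul hp]; rw [pow_succ] at hs; exact hs
    have hlt : (r + s) / p < p ^ n := by
      rw [hd]
      refine ih (r / p) (s / p) hr' hs' ?_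
      intro j hj
      rw [Nat.div_div_eq_div_mul, Nat.div_div_eq_div_mul, ← pow_succ']
      exact h (j + 1) (by omega)
    rw [pow_succ, ← Nat.div_lt_iff_lt_mul hp]
    exact hlt

private lemma auxListProdMul {M : Type*} [Monoid M] (f g : ℕ → M)
    (h : ∀ i j, Commute (f i) (g j)) :
    ∀ n, ((List.range n).map f).prod * ((List.range n).map g).prod
      = ((List.range n).map (fun i => f i * g i)).prod := by
  intro n
  induction n with
  | zero => simp
  | succ n ih =>
    rw [List.range_succ]
    simp only [List.map_append, List.prod_append, List.map_cons, List.map_nil,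
      List.prod_cons, List.prod_nil, mul_one]
    have hc : Commute (f n) (((List.range n).map g).prod) := by
      refine Commute.list_prod_right _ _ ?_
      intro x hx
      simp only [List.mem_map] at hx
      obtain ⟨j, _, rfl⟩ := hx
      exact h n j
    set P := ((List.range n).map f).prod
    set Q := ((List.range n).map g).prod
    calc P * f n * (Q * g n) = P * (f n * Q) * g n := by rw [mul_assoc, mul_assoc, mul_assoc]
      _ = P * (Q * f n) * g n := by rw [hc.eq]
      _ = P * Q * (f n * g n) := by rw [← mul_assoc, mul_assoc (P * Q)]
    rw [ih]

theorem stmt_11 {k : Type*} [Field k] {p d : ℕ} [hp : Fact p.Prime] [CharP k p]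
    (m : ℕ) (X : ℕ → Matrix (Fin d) (Fin d) k)
    (hcomm : ∀ i j, X i * X j = X j * X i)
    (hnil : ∀ i, X i ^ p = 0)
    (c : ℕ → Matrix (Fin d) (Fin d) k)
    (hc : ∀ r, r < p ^ (m + 1) →
      c r = (∏ i ∈ Finset.range (m + 1), ((r / p ^ i % p).factorial : k))⁻¹ •
        ((List.range (m + 1)).map (fun i => X i ^ (r / p ^ i % p))).prod)
    (hc0 : ∀ r, p ^ (m + 1) ≤ r → c r = 0) :
    ∀ r s, c r * c s = ((r + s).choose r : k) • c (r + s) := by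
  have hp' : 0 < p := hp.out.pos
  intro r s
  by_cases hr : r < p ^ (m + 1)
  swap
  · push_neg at hr
    rw [hc0 r hr, zero_mul, hc0 (r + s) (le_trans hr (Nat.le_add_right _ _)), smul_zero]
  by_cases hs : s < p ^ (m + 1)
  swap
  · push_neg at hs
    rw [hc0 s hs, mul_zero, hc0 (r + s) (le_trans hs (Nat.le_add_left _ _)), smul_zero]
  have hcomm' : ∀ i j, Commute (X i ^ (r / p ^ i % p)) (X j ^ (s / p ^ j % p)) :=
    fun i j => (show Commute (X i) (X j) from hcomm i j).pow_pow _ _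
  have hfact : ∀ t : ℕ, t < p → ((t.factorial : k) ≠ 0) := by
    intro t ht h0
    rw [CharP.cast_eq_zero_iff k p] at h0
    have := (Nat.Prime.dvd_factorial hp.out).mp h0
    omega
  by_cases hcar : ∀ j, j < m + 1 → r / p ^ j % p + s / p ^ j % p < p
  · -- no carry case
    have hdig : ∀ i, i < m + 1 → (r + s) / p ^ i % p = r / p ^ i % p + s / p ^ i % p :=
      fun i hi => auxDigitNoCarry hp' i r s (fun j hj => hcar j (by omega))
    have hrs : r + s < p ^ (m + 1) := auxNoCarryLt hp' (m + 1) r s hr hs hcar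
    rw [hc r hr, hc s hs, hc (r + s) hrs]
    have hWmap : (List.range (m + 1)).map (fun i => X i ^ ((r + s) / p ^ i % p))
        = (List.range (m + 1)).map (fun i => X i ^ (r / p ^ i % p + s / p ^ i % p)) :=
      List.map_congr_left fun i hi => by rw [hdig i (List.mem_range.mp hi)]
    have hDeq : (∏ i ∈ Finset.range (m + 1), (((r + s) / p ^ i % p).factorial : k))
        = ∏ i ∈ Finset.range (m + 1), ((r / p ^ i % p + s / p ^ i % p).factorial : k) :=
      Finset.prod_congr rfl fun i hi => by rw [hdig i (Finset.mem_range.mp hi)]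
    rw [hWmap, hDeq, smul_mul_assoc, mul_smul_comm, smul_smul, smul_smul,
      auxListProdMul _ _ hcomm' (m + 1)]
    have hPmap : (List.range (m + 1)).map
          (fun i => X i ^ (r / p ^ i % p) * X i ^ (s / p ^ i % p))
        = (List.range (m + 1)).map (fun i => X i ^ (r / p ^ i % p + s / p ^ i % p)) :=
      List.map_congr_left fun i _ => by rw [pow_add]
    rw [hPmap]
    congr 1
    -- scalar identity
    have hlucas : (((r + s).choose r : ℕ) : k)
        = ∏ i ∈ Finset.range (m + 1),
            (((r / p ^ i % p + s / p ^ i % p).choose (r / p ^ i % p) : ℕ) : k) := by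
      have hmod := Choose.choose_modEq_prod_range_choose_nat (p := p) (a := m + 1) hrs hr
      rw [CharP.natCast_eq_natCast' k p hmod, Nat.cast_prod]
      exact Finset.prod_congr rfl fun i hi => by rw [hdig i (Finset.mem_range.mp hi)]
    have key : (((r + s).choose r : ℕ) : k) *
        ((∏ i ∈ Finset.range (m + 1), ((r / p ^ i % p).factorial : k)) *
         (∏ i ∈ Finset.range (m + 1), ((s / p ^ i % p).factorial : k)))
        = ∏ i ∈ Finset.range (m + 1), ((r / p ^ i % p + s / p ^ i % p).factorial : k) := by
      rw [hlucas, ← Finset.prod_mul_distrib, ← Finset.prod_mul_distrib]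
      refine Finset.prod_congr rfl fun i _ => ?_
      have hnat : ((r / p ^ i % p + s / p ^ i % p).choose (r / p ^ i % p)) *
          ((r / p ^ i % p).factorial * (s / p ^ i % p).factorial)
          = (r / p ^ i % p + s / p ^ i % p).factorial := by
        rw [mul_comm ((r / p ^ i % p).factorial), ← mul_assoc,
          add_comm (r / p ^ i % p) (s / p ^ i % p)]
        exact Nat.add_choose_mul_factorial_mul_factorial (s / p ^ i % p) (r / p ^ i % p)
      exact_mod_cast congrArg (Nat.cast : ℕ → k) hnat
    have hA : (∏ i ∈ Finset.range (m + 1), ((r / p ^ i % p).factorial : k)) ≠ 0 :=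
      Finset.prod_ne_zero_iff.mpr fun i _ => hfact _ (Nat.mod_lt _ hp')
    have hB : (∏ i ∈ Finset.range (m + 1), ((s / p ^ i % p).factorial : k)) ≠ 0 :=
      Finset.prod_ne_zero_iff.mpr fun i _ => hfact _ (Nat.mod_lt _ hp')
    have hD : (∏ i ∈ Finset.range (m + 1), ((r / p ^ i % p + s / p ^ i % p).factorial : k)) ≠ 0 :=
      Finset.prod_ne_zero_iff.mpr fun i hi => hfact _ (hcar i (Finset.mem_range.mp hi))
    field_simp
    linear_combination -key
  · -- carry case
    push_neg at hcar
    obtain ⟨j0, hj0n, hj0⟩ := hcar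
    have hex : ∃ j, p ≤ r / p ^ j % p + s / p ^ j % p := ⟨j0, hj0⟩
    set i := Nat.find hex with hidef
    have hi : p ≤ r / p ^ i % p + s / p ^ i % p := Nat.find_spec hex
    have hmin : ∀ j, j < i → r / p ^ j % p + s / p ^ j % p < p :=
      fun j hj => lt_of_not_ge (Nat.find_min hex hj)
    have hin : i < m + 1 := lt_of_le_of_lt (Nat.find_min' hex hj0) hj0n
    have hdigc := auxDigitCarry hp' i r s hmin hi
    have hCk : (((r + s).choose r : ℕ) : k) = 0 := by
      have h1 : r + s < p ^ (m + 2) := by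
        rw [pow_succ]
        calc r + s < 2 * p ^ (m + 1) := by omega
          _ ≤ p ^ (m + 1) * p := by
            rw [mul_comm 2 (p ^ (m + 1))]; exact Nat.mul_le_mul_left _ hp.out.two_le
      have h2 : r < p ^ (m + 2) :=
        lt_of_lt_of_le hr (Nat.pow_le_pow_right hp' (by omega))
      have hmod := Choose.choose_modEq_prod_range_choose_nat (p := p) (a := m + 2) h1 h2
      rw [CharP.natCast_eq_natCast' k p hmod]
      have hS : s / p ^ i % p < p := Nat.mod_lt _ hp'
      have hz : (∏ j ∈ Finset.range (m + 2),
          ((r + s) / p ^ j % p).choose (r / p ^ j % p)) = 0 :=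
        Finset.prod_eq_zero (Finset.mem_range.mpr (by omega : i < m + 2))
          (Nat.choose_eq_zero_of_lt (by omega))
      rw [hz, Nat.cast_zero]
    have hXz : X i ^ (r / p ^ i % p) * X i ^ (s / p ^ i % p) = 0 := by
      rw [← pow_add]
      have he : r / p ^ i % p + s / p ^ i % p = p + (r / p ^ i % p + s / p ^ i % p - p) := by
        omega
      rw [he, pow_add, hnil, zero_mul]
    have hPz : ((List.range (m + 1)).map
        (fun i => X i ^ (r / p ^ i % p) * X i ^ (s / p ^ i % p))).prod = 0 :=
      List.prod_eq_zero (List.mem_map.mpr ⟨i, List.mem_range.mpr hin, hXz⟩)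
    rw [hc r hr, hc s hs, smul_mul_assoc, mul_smul_comm, smul_smul,
      auxListProdMul _ _ hcomm' (m + 1), hPz, smul_zero, hCk, zero_smul]
end

section
/- Let k be a field of characteristic p > 0 and let (c^r)_{r≥0} be d×d matrices over k, all but finitely many zero, with c^0 = 1 and c^r c^s = C(r+s,r) c^{r+s} for all r,s. Set X_i = c^{p^i}. Then for every r with base-p expansion r = r_0 + r_1 p + ... + r_m p^m, one has c^r = (r_0! ··· r_m!)^{−1} X_0^{r_0} ··· X_m^{r_m}. -/
/-!
Write `r = a + p s` with `a = r % p`. By Lucas' theorem `C(a + p s, a) ≡ 1 (mod p)`, so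
`c r = c a * c (p s)`, and `C(p u + p v, p u) ≡ C(u + v, u) (mod p)`, so `n ↦ c (p n)` again satisfies
the divided-power relations, with `c (p ^ (i + 1)) = c (p * p ^ i)` as its generators. Iterating
`c 1 ^ n = n! • c n` through the digits of `r` gives the formula; the digits are `< p`, so their
factorials are invertible in `k`.
-/

section

open scoped Nat

variable (k : Type*) {A : Type*} [CommSemiring k] [Semiring A] [Algebra k A]

structure IsDividedPowerSeq (c : ℕ → A) : Prop where
  zero : c 0 = 1
  mul : ∀ r s, c r * c s = ((r + s).choose r : k) • c (r + s)

namespace IsDividedPowerSeq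

variable {k} {c : ℕ → A}

theorem apply_one_pow (hc : IsDividedPowerSeq k c) (n : ℕ) : c 1 ^ n = (n ! : k) • c n := by
  induction n with
  | zero => simp [hc.zero]
  | succ n ih =>
    rw [pow_succ, ih, smul_mul_assoc, hc.mul n 1, Nat.choose_succ_self_right, smul_smul,
      Nat.factorial_succ, Nat.cast_mul, mul_comm]

variable {p : ℕ} [Fact p.Prime] [CharP k p]

theorem mul_prime_mul_of_lt (hc : IsDividedPowerSeq k c) {a : ℕ} (ha : a < p) (s : ℕ) :
    c (a + p * s) = c a * c (p * s) := by
  have hp : 0 < p := (Fact.out : p.Prime).pos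
  have hchoose : (a + p * s).choose a ≡ 1 [MOD p] := by
    have := Choose.choose_modEq_choose_mod_mul_choose_div_nat (p := p) (n := a + p * s) (k := a)
    rwa [Nat.add_mul_mod_self_left, Nat.add_mul_div_left _ _ hp, Nat.mod_eq_of_lt ha,
      Nat.div_eq_of_lt ha, Nat.zero_add, Nat.choose_self, Nat.choose_zero_right] at this
  rw [hc.mul, CharP.natCast_eq_natCast' k p hchoose, Nat.cast_one, one_smul]

theorem comp_prime_mul (hc : IsDividedPowerSeq k c) : IsDividedPowerSeq k (fun n ↦ c (p * n)) where
  zero := by simpa using hc.zero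
  mul u v := by
    rw [hc.mul, ← Nat.mul_add,
      CharP.natCast_eq_natCast' k p (Choose.choose_mul_mul_modEq_choose_nat (p := p))]

theorem prod_factorial_digits_smul (hc : IsDividedPowerSeq k c) {m r : ℕ}
    (hr : r < p ^ (m + 1)) :
    (∏ i ∈ Finset.range (m + 1), ((r / p ^ i % p) ! : k)) • c r =
      ((List.range (m + 1)).map (fun i ↦ c (p ^ i) ^ (r / p ^ i % p))).prod := by
  have hp : 0 < p := (Fact.out : p.Prime).pos
  induction m generalizing c r with
  | zero =>
    rw [zero_add, pow_one] at hr
    simp [Nat.mod_eq_of_lt hr, hc.apply_one_pow]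
  | succ m ih =>
    obtain ⟨a, s, ha, rfl⟩ : ∃ a s, a < p ∧ r = a + p * s :=
      ⟨r % p, r / p, Nat.mod_lt r hp, (Nat.mod_add_div r p).symm⟩
    have hmod : (a + p * s) % p = a := by rw [Nat.add_mul_mod_self_left, Nat.mod_eq_of_lt ha]
    have hdiv : (a + p * s) / p = s := by
      rw [Nat.add_mul_div_left _ _ hp, Nat.div_eq_of_lt ha, Nat.zero_add]
    have hdigit (i : ℕ) : (a + p * s) / p ^ (i + 1) % p = s / p ^ i % p := by
      rw [pow_succ', ← Nat.div_div_eq_div_mul, hdiv]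
    have hquot : s < p ^ (m + 1) := by
      rwa [← hdiv, Nat.div_lt_iff_lt_mul hp, ← pow_succ]
    rw [Finset.prod_range_succ', List.prod_range_succ', mul_comm]
    simp only [Nat.succ_eq_add_one, hdigit, pow_zero, Nat.div_one, hmod]
    simp only [pow_succ']
    rw [hc.mul_prime_mul_of_lt ha, ← smul_mul_smul_comm, ← hc.apply_one_pow,
      ih hc.comp_prime_mul hquot]

end IsDividedPowerSeq

end

theorem stmt_13_general {k : Type*} [Field k] {p d : ℕ} [hp : Fact p.Prime] [CharP k p]
    (c : ℕ → Matrix (Fin d) (Fin d) k)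
    (h0 : c 0 = 1)
    (hrel : ∀ r s, c r * c s = ((r + s).choose r : k) • c (r + s)) :
    ∀ r m, r < p ^ (m + 1) →
      c r = (∏ i ∈ Finset.range (m + 1), ((r / p ^ i % p).factorial : k))⁻¹ •
        ((List.range (m + 1)).map (fun i => c (p ^ i) ^ (r / p ^ i % p))).prod := by
  intro r m hr
  have hunit : ∏ i ∈ Finset.range (m + 1), ((r / p ^ i % p).factorial : k) ≠ 0 :=
    Finset.prod_ne_zero_iff.mpr fun i _ ↦
      ((IsUnit.natCast_factorial_iff_of_charP p).mpr (Nat.mod_lt _ hp.out.pos)).ne_zero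
  rw [eq_inv_smul_iff₀ hunit]
  exact IsDividedPowerSeq.prod_factorial_digits_smul ⟨h0, hrel⟩ hr

theorem stmt_13 {k : Type*} [Field k] {p d : ℕ} [hp : Fact p.Prime] [CharP k p]
    (c : ℕ → Matrix (Fin d) (Fin d) k)
    (hfin : ∃ N, ∀ r > N, c r = 0)
    (h0 : c 0 = 1)
    (hrel : ∀ r s, c r * c s = ((r + s).choose r : k) • c (r + s)) :
    ∀ r m, r < p ^ (m + 1) →
      c r = (∏ i ∈ Finset.range (m + 1), ((r / p ^ i % p).factorial : k))⁻¹ •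
        ((List.range (m + 1)).map (fun i => c (p ^ i) ^ (r / p ^ i % p))).prod :=
  stmt_13_general (hp := hp) c h0 hrel
end

section
/- In the polynomial Hopf algebra A = k[x,y,z] with comultiplication Δ(x) = x⊗1 + 1⊗x, Δ(y) = y⊗1 + 1⊗y, Δ(z) = z⊗1 + x⊗y + 1⊗z, the coefficient of the monomial tensor x^{s_1}y^{s_2}z^{s_3} ⊗ x^{t_1}y^{t_2}z^{t_3} in Δ(x^{r_1}y^{r_2}z^{r_3}) equals Σ over all l with 0 ≤ l ≤ min(s_1,t_2) and (s_1+t_1−l, s_2+t_2−l, s_3+t_3+l) = (r_1,r_2,r_3) of C(s_1+t_1−l, t_1)·C(s_2+t_2−l, s_2)·(s_3+t_3+l)!/(s_3! t_3! l!). -/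
open TensorProduct MvPolynomial

noncomputable def heisenbergComul (k : Type*) [CommRing k] :
    MvPolynomial (Fin 3) k →ₐ[k] MvPolynomial (Fin 3) k ⊗[k] MvPolynomial (Fin 3) k :=
  aeval ![X 0 ⊗ₜ 1 + 1 ⊗ₜ X 0,
          X 1 ⊗ₜ 1 + 1 ⊗ₜ X 1,
          X 2 ⊗ₜ 1 + X 0 ⊗ₜ X 1 + 1 ⊗ₜ X 2]

/-- The coefficient of the monomial tensor `x^s ⊗ x^t` in an element of `A ⊗ A`. -/
noncomputable def tensorCoeff {k : Type*} [CommRing k] (s t : Fin 3 →₀ ℕ) :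
    MvPolynomial (Fin 3) k ⊗[k] MvPolynomial (Fin 3) k →ₗ[k] k :=
  (TensorProduct.lid k k).toLinearMap ∘ₗ TensorProduct.map (MvPolynomial.lcoeff k s) (MvPolynomial.lcoeff k t)

open Finset

section Aux

variable {k : Type*} [CommRing k]

lemma tensorCoeff_tmul (s t : Fin 3 →₀ ℕ) (p q : MvPolynomial (Fin 3) k) :
    tensorCoeff s t (p ⊗ₜ[k] q) = coeff s p * coeff t q := by
  simp [tensorCoeff, lcoeff]

lemma tmul_add_pow (u v : MvPolynomial (Fin 3) k) (n : ℕ) :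
    ((u ⊗ₜ[k] (1:MvPolynomial (Fin 3) k)) + (1:MvPolynomial (Fin 3) k) ⊗ₜ v)^n
      = ∑ i ∈ range (n+1), (n.choose i) • ((u^i) ⊗ₜ[k] (v^(n-i))) := by
  rw [add_pow]
  refine Finset.sum_congr rfl fun i _ => ?_
  rw [Algebra.TensorProduct.tmul_pow, Algebra.TensorProduct.tmul_pow,
    Algebra.TensorProduct.tmul_mul_tmul, one_pow, one_pow, mul_one, one_mul,
    nsmul_eq_mul, mul_comm]

lemma tri_pow (n : ℕ) :
    ((X 2 ⊗ₜ[k] (1 : MvPolynomial (Fin 3) k) + X 0 ⊗ₜ X 1 + 1 ⊗ₜ X 2 :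
        MvPolynomial (Fin 3) k ⊗[k] MvPolynomial (Fin 3) k))^n
      = ∑ q ∈ range (n+1), ∑ p ∈ range (n-q+1),
          (n.choose q * (n-q).choose p) • ((X 0 ^ q * X 2 ^ p) ⊗ₜ[k] (X 1 ^ q * X 2 ^ (n-q-p))) := by
  have h : ((X 2 ⊗ₜ[k] (1 : MvPolynomial (Fin 3) k) + X 0 ⊗ₜ X 1 + 1 ⊗ₜ X 2 :
        MvPolynomial (Fin 3) k ⊗[k] MvPolynomial (Fin 3) k))
      = (X 0 ⊗ₜ X 1 + (X 2 ⊗ₜ[k] (1 : MvPolynomial (Fin 3) k) + 1 ⊗ₜ X 2)) := by ring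
  rw [h, add_pow]
  refine Finset.sum_congr rfl fun q hq => ?_
  rw [tmul_add_pow, Finset.mul_sum, Finset.sum_mul]
  refine Finset.sum_congr rfl fun p hp => ?_
  rw [Algebra.TensorProduct.tmul_pow, mul_smul_comm, smul_mul_assoc,
    Algebra.TensorProduct.tmul_mul_tmul, nsmul_eq_mul, nsmul_eq_mul]
  push_cast
  ring

lemma expand_prod (r₁ r₂ r₃ : ℕ) :
    ((X 0 ⊗ₜ[k] (1:MvPolynomial (Fin 3) k) + 1 ⊗ₜ X 0)^r₁
      * (X 1 ⊗ₜ[k] (1:MvPolynomial (Fin 3) k) + 1 ⊗ₜ X 1)^r₂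
      * (X 2 ⊗ₜ[k] (1:MvPolynomial (Fin 3) k) + X 0 ⊗ₜ X 1 + 1 ⊗ₜ X 2)^r₃ :
        MvPolynomial (Fin 3) k ⊗[k] MvPolynomial (Fin 3) k)
    = ∑ i ∈ range (r₁+1), ∑ j ∈ range (r₂+1), ∑ q ∈ range (r₃+1), ∑ p ∈ range (r₃-q+1),
        (r₁.choose i * r₂.choose j * (r₃.choose q * (r₃-q).choose p)) •
          ((X 0^(i+q) * X 1^j * X 2^p) ⊗ₜ[k] (X 0^(r₁-i) * X 1^(r₂-j+q) * X 2^(r₃-q-p))) := by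
  rw [tmul_add_pow, tmul_add_pow, tri_pow, Finset.sum_mul_sum, Finset.sum_mul]
  refine Finset.sum_congr rfl fun i hi => ?_
  rw [Finset.sum_mul]
  refine Finset.sum_congr rfl fun j hj => ?_
  rw [Finset.mul_sum]
  refine Finset.sum_congr rfl fun q hq => ?_
  rw [Finset.mul_sum]
  refine Finset.sum_congr rfl fun p hp => ?_
  simp only [smul_mul_assoc, mul_smul_comm, Algebra.TensorProduct.tmul_mul_tmul, smul_smul]
  congr 1
  · ring
  · congr 1 <;> ring

lemma coeff_X_pow_prod (a b c a' b' c' : ℕ) :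
    coeff (Finsupp.single (0:Fin 3) a + Finsupp.single 1 b + Finsupp.single 2 c)
      ((X 0 ^ a' * X 1 ^ b' * X 2 ^ c' : MvPolynomial (Fin 3) k))
    = if a' = a ∧ b' = b ∧ c' = c then 1 else 0 := by
  rw [X_pow_eq_monomial, X_pow_eq_monomial, X_pow_eq_monomial, monomial_mul, monomial_mul,
    coeff_monomial]
  have : (Finsupp.single (0:Fin 3) a' + Finsupp.single 1 b' + Finsupp.single 2 c'
      = Finsupp.single 0 a + Finsupp.single 1 b + Finsupp.single 2 c)
    ↔ (a' = a ∧ b' = b ∧ c' = c) := by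
    constructor
    · intro h
      have h0 := DFunLike.congr_fun h 0
      have h1 := DFunLike.congr_fun h 1
      have h2 := DFunLike.congr_fun h 2
      simp [Finsupp.single_apply] at h0 h1 h2
      exact ⟨h0, h1, h2⟩
    · rintro ⟨rfl, rfl, rfl⟩; rfl
  rw [if_congr this rfl rfl, one_mul, one_mul]

lemma sum_ite_range {M : Type*} [AddCommMonoid M] (n a : ℕ) (P : ℕ → Prop) [DecidablePred P]
    (f : ℕ → M) (hP : ∀ x, P x → x = a) :
    ∑ x ∈ range n, (if P x then f x else 0) = if a < n ∧ P a then f a else 0 := by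
  by_cases ha : a < n
  · rw [Finset.sum_eq_single a (fun b _ hb => by rw [if_neg (fun h => hb (hP b h))])
      (fun h => absurd (Finset.mem_range.mpr ha) h)]
    by_cases hPa : P a <;> simp [ha, hPa]
  · rw [Finset.sum_eq_zero, if_neg (by tauto)]
    intro x hx
    exact if_neg (fun h => ha ((hP x h) ▸ Finset.mem_range.mp hx))

lemma natval (q s₁ s₂ s₃ t₁ t₂ t₃ : ℕ) (h1 : q ≤ s₁) :
    (s₁+t₁-q).choose (s₁-q) * (s₂+t₂-q).choose s₂ * ((s₃+t₃+q).choose q * (s₃+t₃+q-q).choose s₃)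
    = (s₁+t₁-q).choose t₁ * (s₂+t₂-q).choose s₂ *
        ((s₃+t₃+q).factorial / (s₃.factorial * t₃.factorial * q.factorial)) := by
  have e1 : s₁+t₁-q = (s₁-q)+t₁ := by omega
  have e3 : s₃+t₃+q-q = s₃+t₃ := by omega
  have e4 : (s₃+t₃+q).choose q * (s₃+t₃).choose s₃
      = (s₃+t₃+q).factorial / (s₃.factorial * t₃.factorial * q.factorial) := by
    have hd : (s₃+t₃+q).factorial
        = ((s₃+t₃+q).choose q * (s₃+t₃).choose s₃) * (s₃.factorial * t₃.factorial * q.factorial) := by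
      have ha := Nat.add_choose_mul_factorial_mul_factorial (s₃+t₃) q
      have hb := Nat.add_choose_mul_factorial_mul_factorial t₃ s₃
      rw [Nat.add_comm t₃ s₃] at hb
      rw [← ha, ← hb]; ring
    rw [hd, Nat.mul_div_cancel]
    positivity
  have e5 : ((s₁-q)+t₁).choose (s₁-q) = ((s₁-q)+t₁).choose t₁ := by
    rw [← Nat.choose_symm (Nat.le_add_left t₁ (s₁-q)), Nat.add_sub_cancel]
  rw [e3, e4, e1, e5]

lemma comb (r₁ r₂ r₃ s₁ s₂ s₃ t₁ t₂ t₃ : ℕ) :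
    (∑ i ∈ range (r₁+1), ∑ j ∈ range (r₂+1), ∑ q ∈ range (r₃+1), ∑ p ∈ range (r₃-q+1),
      if (i+q = s₁ ∧ j = s₂ ∧ p = s₃) ∧ (r₁-i = t₁ ∧ r₂-j+q = t₂ ∧ r₃-q-p = t₃) then
        ((r₁.choose i * r₂.choose j * (r₃.choose q * (r₃-q).choose p) : ℕ) : k)
      else 0)
    = ∑ l ∈ Finset.range (min s₁ t₂ + 1),
        if (s₁ + t₁ - l, s₂ + t₂ - l, s₃ + t₃ + l) = (r₁, r₂, r₃) then
          (((s₁ + t₁ - l).choose t₁ * (s₂ + t₂ - l).choose s₂ *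
            ((s₃ + t₃ + l).factorial /
              (s₃.factorial * t₃.factorial * l.factorial)) : ℕ) : k)
        else 0 := by
  set n : ℕ := r₁+r₂+r₃+s₁+s₂+s₃+t₁+t₂+t₃+1 with hn
  calc
    (∑ i ∈ range (r₁+1), ∑ j ∈ range (r₂+1), ∑ q ∈ range (r₃+1), ∑ p ∈ range (r₃-q+1),
      if (i+q = s₁ ∧ j = s₂ ∧ p = s₃) ∧ (r₁-i = t₁ ∧ r₂-j+q = t₂ ∧ r₃-q-p = t₃) then
        ((r₁.choose i * r₂.choose j * (r₃.choose q * (r₃-q).choose p) : ℕ) : k)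
      else 0)
    = (∑ i ∈ range n, ∑ j ∈ range n, ∑ q ∈ range n, ∑ p ∈ range n,
      if (i+q = s₁ ∧ j = s₂ ∧ p = s₃) ∧ (r₁-i = t₁ ∧ r₂-j+q = t₂ ∧ r₃-q-p = t₃) then
        ((r₁.choose i * r₂.choose j * (r₃.choose q * (r₃-q).choose p) : ℕ) : k)
      else 0) := by
      rw [Finset.sum_subset (Finset.range_subset_range.mpr (by omega : r₁+1 ≤ n))
        (fun i _ hi => by
          simp [Nat.choose_eq_zero_of_lt (show r₁ < i by simpa using hi)])]
      refine Finset.sum_congr rfl fun i _ => ?_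
      rw [Finset.sum_subset (Finset.range_subset_range.mpr (by omega : r₂+1 ≤ n))
        (fun j _ hj => by
          simp [Nat.choose_eq_zero_of_lt (show r₂ < j by simpa using hj)])]
      refine Finset.sum_congr rfl fun j _ => ?_
      rw [Finset.sum_subset (Finset.range_subset_range.mpr (by omega : r₃+1 ≤ n))
        (fun q _ hq => by
          simp [Nat.choose_eq_zero_of_lt (show r₃ < q by simpa using hq)])]
      refine Finset.sum_congr rfl fun q _ => ?_
      rw [Finset.sum_subset (Finset.range_subset_range.mpr (by omega : r₃-q+1 ≤ n))
        (fun p _ hp => by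
          simp [Nat.choose_eq_zero_of_lt (show r₃-q < p by simpa using hp)])]
    _ = (∑ q ∈ range n, ∑ i ∈ range n, ∑ j ∈ range n, ∑ p ∈ range n,
      if (i+q = s₁ ∧ j = s₂ ∧ p = s₃) ∧ (r₁-i = t₁ ∧ r₂-j+q = t₂ ∧ r₃-q-p = t₃) then
        ((r₁.choose i * r₂.choose j * (r₃.choose q * (r₃-q).choose p) : ℕ) : k)
      else 0) := by
      rw [show (∑ i ∈ range n, ∑ j ∈ range n, ∑ q ∈ range n, ∑ p ∈ range n,
        if (i+q = s₁ ∧ j = s₂ ∧ p = s₃) ∧ (r₁-i = t₁ ∧ r₂-j+q = t₂ ∧ r₃-q-p = t₃) then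
          ((r₁.choose i * r₂.choose j * (r₃.choose q * (r₃-q).choose p) : ℕ) : k)
        else 0)
        = (∑ i ∈ range n, ∑ q ∈ range n, ∑ j ∈ range n, ∑ p ∈ range n,
        if (i+q = s₁ ∧ j = s₂ ∧ p = s₃) ∧ (r₁-i = t₁ ∧ r₂-j+q = t₂ ∧ r₃-q-p = t₃) then
          ((r₁.choose i * r₂.choose j * (r₃.choose q * (r₃-q).choose p) : ℕ) : k)
        else 0) from Finset.sum_congr rfl fun i _ => Finset.sum_comm]
      exact Finset.sum_comm
    _ = (∑ q ∈ range n, ∑ i ∈ range n, ∑ j ∈ range n,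
      if s₃ < n ∧ ((i+q = s₁ ∧ j = s₂ ∧ s₃ = s₃) ∧ (r₁-i = t₁ ∧ r₂-j+q = t₂ ∧ r₃-q-s₃ = t₃)) then
        ((r₁.choose i * r₂.choose j * (r₃.choose q * (r₃-q).choose s₃) : ℕ) : k)
      else 0) := by
      refine Finset.sum_congr rfl fun q _ => Finset.sum_congr rfl fun i _ =>
        Finset.sum_congr rfl fun j _ => ?_
      exact sum_ite_range n s₃ _ _ (fun x hx => hx.1.2.2)
    _ = (∑ q ∈ range n, ∑ i ∈ range n,
      if s₂ < n ∧ (s₃ < n ∧ ((i+q = s₁ ∧ s₂ = s₂ ∧ s₃ = s₃) ∧ (r₁-i = t₁ ∧ r₂-s₂+q = t₂ ∧ r₃-q-s₃ = t₃))) then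
        ((r₁.choose i * r₂.choose s₂ * (r₃.choose q * (r₃-q).choose s₃) : ℕ) : k)
      else 0) := by
      refine Finset.sum_congr rfl fun q _ => Finset.sum_congr rfl fun i _ => ?_
      exact sum_ite_range n s₂ _ _ (fun x hx => hx.2.1.2.1)
    _ = (∑ q ∈ range n,
      if s₁-q < n ∧ (s₂ < n ∧ (s₃ < n ∧ ((s₁-q+q = s₁ ∧ s₂ = s₂ ∧ s₃ = s₃) ∧ (r₁-(s₁-q) = t₁ ∧ r₂-s₂+q = t₂ ∧ r₃-q-s₃ = t₃)))) then
        ((r₁.choose (s₁-q) * r₂.choose s₂ * (r₃.choose q * (r₃-q).choose s₃) : ℕ) : k)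
      else 0) := by
      refine Finset.sum_congr rfl fun q _ => ?_
      exact sum_ite_range n (s₁-q) _ _ (fun x hx => by have := hx.2.2.1.1; omega)
    _ = (∑ q ∈ range (min s₁ t₂ + 1),
      if s₁-q < n ∧ (s₂ < n ∧ (s₃ < n ∧ ((s₁-q+q = s₁ ∧ s₂ = s₂ ∧ s₃ = s₃) ∧ (r₁-(s₁-q) = t₁ ∧ r₂-s₂+q = t₂ ∧ r₃-q-s₃ = t₃)))) then
        ((r₁.choose (s₁-q) * r₂.choose s₂ * (r₃.choose q * (r₃-q).choose s₃) : ℕ) : k)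
      else 0) := by
      refine (Finset.sum_subset (Finset.range_subset_range.mpr (by omega : min s₁ t₂ + 1 ≤ n))
        (fun q _ hq => ?_)).symm
      refine if_neg (fun hA => ?_)
      obtain ⟨-, -, -, ⟨h1, -, -⟩, -, h2, -⟩ := hA
      simp only [Finset.mem_range] at hq
      omega
    _ = ∑ l ∈ Finset.range (min s₁ t₂ + 1),
        if (s₁ + t₁ - l, s₂ + t₂ - l, s₃ + t₃ + l) = (r₁, r₂, r₃) then
          (((s₁ + t₁ - l).choose t₁ * (s₂ + t₂ - l).choose s₂ *
            ((s₃ + t₃ + l).factorial /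
              (s₃.factorial * t₃.factorial * l.factorial)) : ℕ) : k)
        else 0 := by
      refine Finset.sum_congr rfl fun q hq => ?_
      simp only [Finset.mem_range] at hq
      simp only [Prod.mk.injEq]
      split_ifs with hA hR hR
      · obtain ⟨-, -, -, ⟨e1, -, -⟩, f1, f2, f3⟩ := hA
        obtain ⟨g1, g2, g3⟩ := hR
        subst g1 g2 g3
        exact congrArg Nat.cast (natval q s₁ s₂ s₃ t₁ t₂ t₃ (by omega))
      · obtain ⟨-, -, -, ⟨e1, -, -⟩, f1, f2, f3⟩ := hA
        by_cases c1 : s₁ - q ≤ r₁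
        · by_cases c2 : s₂ ≤ r₂
          · by_cases c3 : q ≤ r₃
            · by_cases c4 : s₃ ≤ r₃ - q
              · exact absurd ⟨by omega, by omega, by omega⟩ hR
              · rw [Nat.choose_eq_zero_of_lt (by omega : r₃ - q < s₃)]; simp
            · rw [Nat.choose_eq_zero_of_lt (by omega : r₃ < q)]; simp
          · rw [Nat.choose_eq_zero_of_lt (by omega : r₂ < s₂)]; simp
        · rw [Nat.choose_eq_zero_of_lt (by omega : r₁ < s₁ - q)]; simp
      · obtain ⟨g1, g2, g3⟩ := hR
        exact absurd ⟨by omega, by omega, by omega,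
          ⟨by omega, by trivial, by trivial⟩, by omega, by omega, by omega⟩ hA
      · rfl

end Aux

theorem stmt_14 {k : Type*} [CommRing k] (r₁ r₂ r₃ s₁ s₂ s₃ t₁ t₂ t₃ : ℕ) :
    tensorCoeff
        (Finsupp.single 0 s₁ + Finsupp.single 1 s₂ + Finsupp.single 2 s₃)
        (Finsupp.single 0 t₁ + Finsupp.single 1 t₂ + Finsupp.single 2 t₃)
        (heisenbergComul k (X 0 ^ r₁ * X 1 ^ r₂ * X 2 ^ r₃)) =
      ∑ l ∈ Finset.range (min s₁ t₂ + 1),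
        if (s₁ + t₁ - l, s₂ + t₂ - l, s₃ + t₃ + l) = (r₁, r₂, r₃) then
          (((s₁ + t₁ - l).choose t₁ * (s₂ + t₂ - l).choose s₂ *
            ((s₃ + t₃ + l).factorial /
              (s₃.factorial * t₃.factorial * l.factorial)) : ℕ) : k)
        else 0 := by
  have h1 : heisenbergComul k (X 0 ^ r₁ * X 1 ^ r₂ * X 2 ^ r₃)
      = ((X 0 ⊗ₜ[k] (1:MvPolynomial (Fin 3) k) + 1 ⊗ₜ X 0)^r₁
        * (X 1 ⊗ₜ[k] (1:MvPolynomial (Fin 3) k) + 1 ⊗ₜ X 1)^r₂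
        * (X 2 ⊗ₜ[k] (1:MvPolynomial (Fin 3) k) + X 0 ⊗ₜ X 1 + 1 ⊗ₜ X 2)^r₃ :
          MvPolynomial (Fin 3) k ⊗[k] MvPolynomial (Fin 3) k) := by
    simp [heisenbergComul]
  rw [h1, expand_prod]
  simp only [map_sum, map_nsmul]
  refine Eq.trans (Finset.sum_congr rfl fun i _ => Finset.sum_congr rfl fun j _ =>
    Finset.sum_congr rfl fun q _ => Finset.sum_congr rfl fun p _ => ?_)
    (comb r₁ r₂ r₃ s₁ s₂ s₃ t₁ t₂ t₃)
  rw [tensorCoeff_tmul, coeff_X_pow_prod, coeff_X_pow_prod]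
  by_cases hP : (i+q = s₁ ∧ j = s₂ ∧ p = s₃) <;>
    by_cases hQ : (r₁-i = t₁ ∧ r₂-j+q = t₂ ∧ r₃-q-p = t₃) <;>
    simp [hP, hQ, nsmul_eq_mul]
end

section
/- Let k be a field and let (c^{r})_{r∈ℕ³} be d×d matrices over k, all but finitely many zero, c^{(0,0,0)} = 1, satisfying the Heisenberg fundamental relation: for all triples s, t ∈ ℕ³, c^{s} c^{t} = Σ_{l=0}^{min(s_1,t_2)} C(s_1+t_1−l, t_1) C(s_2+t_2−l, s_2) · ((s_3+t_3+l)!/(s_3! t_3! l!)) · c^{s+t+(−l,−l,l)}. Then for all m, n ≥ 0, the matrices Z_n = c^{(0,0,p^n)} satisfy [Z_n, X_m] = [Z_n, Y_m] = 0, where X_m = c^{(p^m,0,0)} and Y_m = c^{(0,p^m,0)} (here k may have any characteristic, with p any fixed positive integer). -/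
def HeisenbergRelation {R A : Type*} [Semiring R] [Semiring A] [Module R A]
    (c : ℕ × ℕ × ℕ → A) : Prop :=
  ∀ s t : ℕ × ℕ × ℕ,
    c s * c t =
      ∑ l ∈ Finset.range (min s.1 t.2.1 + 1),
        (((s.1 + t.1 - l).choose t.1 * ((s.2.1 + t.2.1 - l).choose s.2.1) *
          ((s.2.2 + t.2.2 + l).factorial /
            (s.2.2.factorial * t.2.2.factorial * l.factorial)) : ℕ) : R) •
          c (s.1 + t.1 - l, s.2.1 + t.2.1 - l, s.2.2 + t.2.2 + l)

namespace HeisenbergRelation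

variable {R A : Type*} [Semiring R] [Semiring A] [Module R A] {c : ℕ × ℕ × ℕ → A}

/-- Both products have `min 0 _ = min _ 0 = 0`, so each sum is its `l = 0` term alone,
and the two terms agree. -/
theorem commute_center (hc : HeisenbergRelation (R := R) c) (a : ℕ) (t : ℕ × ℕ × ℕ) :
    Commute (c (0, 0, a)) (c t) := by
  obtain ⟨t₁, t₂, t₃⟩ := t
  rw [Commute, SemiconjBy, hc, hc]
  simp [Nat.choose_self, add_comm a t₃, mul_comm a.factorial]

end HeisenbergRelation

theorem stmt_16_general {k : Type*} [Field k] {d : ℕ} (p : ℕ)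
    (c : ℕ × ℕ × ℕ → Matrix (Fin d) (Fin d) k)
    (hrel : ∀ s t : ℕ × ℕ × ℕ,
      c s * c t =
        ∑ l ∈ Finset.range (min s.1 t.2.1 + 1),
          (((s.1 + t.1 - l).choose t.1 * ((s.2.1 + t.2.1 - l).choose s.2.1) *
            ((s.2.2 + t.2.2 + l).factorial /
              (s.2.2.factorial * t.2.2.factorial * l.factorial)) : ℕ) : k) •
            c (s.1 + t.1 - l, s.2.1 + t.2.1 - l, s.2.2 + t.2.2 + l)) :
    ∀ m n : ℕ,
      c (0, 0, p ^ n) * c (p ^ m, 0, 0) = c (p ^ m, 0, 0) * c (0, 0, p ^ n) ∧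
      c (0, 0, p ^ n) * c (0, p ^ m, 0) = c (0, p ^ m, 0) * c (0, 0, p ^ n) := by
  have hc : HeisenbergRelation (R := k) c := hrel
  exact fun m n => ⟨hc.commute_center _ _, hc.commute_center _ _⟩

theorem stmt_16 {k : Type*} [Field k] {d : ℕ} (p : ℕ) (hp : 0 < p)
    (c : ℕ × ℕ × ℕ → Matrix (Fin d) (Fin d) k)
    (hfin : ∃ N, ∀ r : ℕ × ℕ × ℕ, N < r.1 + r.2.1 + r.2.2 → c r = 0)
    (h0 : c (0, 0, 0) = 1)
    (hrel : ∀ s t : ℕ × ℕ × ℕ,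
      c s * c t =
        ∑ l ∈ Finset.range (min s.1 t.2.1 + 1),
          (((s.1 + t.1 - l).choose t.1 * ((s.2.1 + t.2.1 - l).choose s.2.1) *
            ((s.2.2 + t.2.2 + l).factorial /
              (s.2.2.factorial * t.2.2.factorial * l.factorial)) : ℕ) : k) •
            c (s.1 + t.1 - l, s.2.1 + t.2.1 - l, s.2.2 + t.2.2 + l)) :
    ∀ m n : ℕ,
      c (0, 0, p ^ n) * c (p ^ m, 0, 0) = c (p ^ m, 0, 0) * c (0, 0, p ^ n) ∧
      c (0, 0, p ^ n) * c (0, p ^ m, 0) = c (0, p ^ m, 0) * c (0, 0, p ^ n) :=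
  stmt_16_general p c hrel
end
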